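/- Let 𝒮, 𝒯 and 𝒞 be limit sketches. Then there is an isomorphism of limit sketches ModSk(𝒮, ModSk(𝒯, 𝒞)) ≅ ModSk(𝒯, ModSk(𝒮, 𝒞)); that is, an isomorphism of the underlying categories, induced by the currying isomorphism Fun(S, Fun(T, C)) ≅ Fun(T, Fun(S, C)), which together with its inverse carries designated cones bijectively to designated cones. -/

import Mathlib

open CategoryTheory CategoryTheory.Limits

structure SketchCone.{s, a, b} (S : Type a) [Category.{b} S] :
    Type (max a b (s + 1)) where
  J : Type s
  [instJ : SmallCategory J]
  D : J ⥤ S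
  cone : Limits.Cone D

attribute [instance] SketchCone.instJ

structure Sketch.{s} : Type (s + 1) where
  S : Type s
  [inst : SmallCategory S]
  cones : Set (SketchCone.{s, s, s} S)

attribute [instance] Sketch.inst

universe u

/-- Transport a designated-cone datum along a functor. -/
def SketchCone.map {S : Type a} [Category.{b} S] {C : Type a'} [Category.{b'} C]
    (c : SketchCone.{s} S) (F : S ⥤ C) : SketchCone.{s} C where
  J := c.J
  D := c.D ⋙ F
  cone := F.mapCone c.cone

/-- A morphism of sketches: a functor carrying designated cones to designated cones. -/
def IsSketchModel (𝒯 𝒞 : Sketch.{u}) (F : 𝒯.S ⥤ 𝒞.S) : Prop :=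
  ∀ c ∈ 𝒯.cones, c.map F ∈ 𝒞.cones

/-- The underlying category of the sketch of models: the full subcategory of the functor
category spanned by the sketch morphisms `𝒯 → 𝒞`. -/
abbrev ModSkCat (𝒯 𝒞 : Sketch.{u}) := ObjectProperty.FullSubcategory (IsSketchModel 𝒯 𝒞)

/-- Evaluation of models at an object `t` of `𝒯`. -/
def evalSk (𝒯 𝒞 : Sketch.{u}) (t : 𝒯.S) : ModSkCat 𝒯 𝒞 ⥤ 𝒞.S :=
  ObjectProperty.ι (IsSketchModel 𝒯 𝒞) ⋙ (evaluation 𝒯.S 𝒞.S).obj t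

/-- The sketch of models `ModSk(𝒯, 𝒞)`: its underlying category is the category of sketch
morphisms `𝒯 → 𝒞`, and its designated cones are exactly those cones whose composite with
the evaluation functor at each object `t` of `𝒯` is a designated cone of `𝒞`. -/
def ModSk (𝒯 𝒞 : Sketch.{u}) : Sketch.{u} where
  S := ModSkCat 𝒯 𝒞
  cones := { c | ∀ t : 𝒯.S, c.map (evalSk 𝒯 𝒞 t) ∈ 𝒞.cones }

/-- The forgetful functor from the underlying category of `ModSk(𝒮, ModSk(𝒯, 𝒞))` to the
iterated functor category. -/
def modSkForget (𝒮 𝒯 𝒞 : Sketch.{u}) : (ModSk 𝒮 (ModSk 𝒯 𝒞)).S ⥤ 𝒮.S ⥤ 𝒯.S ⥤ 𝒞.S :=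
  ObjectProperty.ι (IsSketchModel 𝒮 (ModSk 𝒯 𝒞)) ⋙
    (Functor.whiskeringRight 𝒮.S (ModSk 𝒯 𝒞).S (𝒯.S ⥤ 𝒞.S)).obj
      (ObjectProperty.ι (IsSketchModel 𝒯 𝒞))

/-- The currying ("flip") isomorphism between iterated functor categories, as a functor. -/
def flipFunctor (A : Type*) [Category A] (B : Type*) [Category B] (E : Type*) [Category E] :
    (A ⥤ B ⥤ E) ⥤ B ⥤ A ⥤ E where
  obj F := F.flip
  map α :=
    { app := fun b =>
        { app := fun a => (α.app a).app b
          naturality := fun _ _ f => congrArg (fun t => NatTrans.app t b) (α.naturality f) } }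

/-! Swapping the arguments of a functor `𝒮 ⥤ 𝒯 ⥤ 𝒞` is an involution on the nose, so it
suffices to see that it preserves models and designated cones. Both conditions, unfolded down to
`𝒞`, quantify over all pairs `(s, t)` of objects of `𝒮` and `𝒯`; swapping the arguments only
swaps the order of the two quantifiers. -/

section Flip

variable (𝒮 𝒯 𝒞 : Sketch.{u})

def flipModSkObj (P : (ModSk 𝒮 (ModSk 𝒯 𝒞)).S) : 𝒯.S ⥤ (ModSk 𝒮 𝒞).S :=
  ObjectProperty.lift (IsSketchModel 𝒮 𝒞) ((modSkForget 𝒮 𝒯 𝒞).obj P).flip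
    fun t c hc => P.2 c hc t

def flipModSkCurried : (ModSk 𝒮 (ModSk 𝒯 𝒞)).S ⥤ 𝒯.S ⥤ (ModSk 𝒮 𝒞).S where
  obj := flipModSkObj 𝒮 𝒯 𝒞
  map α := ((ObjectProperty.fullyFaithfulι _).whiskeringRight 𝒯.S).preimage
    ((_root_.flipFunctor _ _ _).map ((modSkForget 𝒮 𝒯 𝒞).map α))
  map_id _ := rfl
  map_comp _ _ := rfl

def flipModSk : (ModSk 𝒮 (ModSk 𝒯 𝒞)).S ⥤ (ModSk 𝒯 (ModSk 𝒮 𝒞)).S :=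
  ObjectProperty.lift (IsSketchModel 𝒯 (ModSk 𝒮 𝒞)) (flipModSkCurried 𝒮 𝒯 𝒞)
    fun P c hc s => (P.1.obj s).2 c hc

theorem flipModSk_comp_flipModSk : flipModSk 𝒮 𝒯 𝒞 ⋙ flipModSk 𝒯 𝒮 𝒞 = 𝟭 _ := rfl

theorem modSkForget_comp_flipFunctor :
    modSkForget 𝒮 𝒯 𝒞 ⋙ _root_.flipFunctor 𝒮.S 𝒯.S 𝒞.S =
      flipModSk 𝒮 𝒯 𝒞 ⋙ modSkForget 𝒯 𝒮 𝒞 :=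
  rfl

theorem mem_modSk_cones_iff_map_flipModSk_mem (c : SketchCone (ModSk 𝒮 (ModSk 𝒯 𝒞)).S) :
    c ∈ (ModSk 𝒮 (ModSk 𝒯 𝒞)).cones ↔ c.map (flipModSk 𝒮 𝒯 𝒞) ∈ (ModSk 𝒯 (ModSk 𝒮 𝒞)).cones :=
  forall_comm

end Flip

/-- There is an isomorphism of limit sketches
`ModSk(𝒮, ModSk(𝒯, 𝒞)) ≅ ModSk(𝒯, ModSk(𝒮, 𝒞))`: an isomorphism of underlying categories,
induced by the currying isomorphism of functor categories, which together with its inverse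
carries designated cones bijectively to designated cones. -/
theorem stmt1 (𝒮 𝒯 𝒞 : Sketch.{u}) :
    ∃ (Φ : (ModSk 𝒮 (ModSk 𝒯 𝒞)).S ⥤ (ModSk 𝒯 (ModSk 𝒮 𝒞)).S)
      (Ψ : (ModSk 𝒯 (ModSk 𝒮 𝒞)).S ⥤ (ModSk 𝒮 (ModSk 𝒯 𝒞)).S),
      Φ ⋙ Ψ = 𝟭 (ModSk 𝒮 (ModSk 𝒯 𝒞)).S ∧
      Ψ ⋙ Φ = 𝟭 (ModSk 𝒯 (ModSk 𝒮 𝒞)).S ∧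
      modSkForget 𝒮 𝒯 𝒞 ⋙ _root_.flipFunctor 𝒮.S 𝒯.S 𝒞.S = Φ ⋙ modSkForget 𝒯 𝒮 𝒞 ∧
      (∀ c : SketchCone (ModSk 𝒮 (ModSk 𝒯 𝒞)).S,
        c ∈ (ModSk 𝒮 (ModSk 𝒯 𝒞)).cones ↔ c.map Φ ∈ (ModSk 𝒯 (ModSk 𝒮 𝒞)).cones) ∧
      (∀ c : SketchCone (ModSk 𝒯 (ModSk 𝒮 𝒞)).S,
        c ∈ (ModSk 𝒯 (ModSk 𝒮 𝒞)).cones ↔ c.map Ψ ∈ (ModSk 𝒮 (ModSk 𝒯 𝒞)).cones) :=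
  ⟨flipModSk 𝒮 𝒯 𝒞, flipModSk 𝒯 𝒮 𝒞, flipModSk_comp_flipModSk 𝒮 𝒯 𝒞,
    flipModSk_comp_flipModSk 𝒯 𝒮 𝒞, modSkForget_comp_flipFunctor 𝒮 𝒯 𝒞,
    mem_modSk_cones_iff_map_flipModSk_mem 𝒮 𝒯 𝒞, mem_modSk_cones_iff_map_flipModSk_mem 𝒯 𝒮 𝒞⟩
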